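/- For integers h and k ≥ 1 with k > h, the generating function for the number of partitions of n with an h-fixed hook whose hook length is k (i.e., h_{k-h,1}(λ) = k) is ∑_{l=1}^k q^{k + l(k-h-1)} [k-1 choose l-1]_q / (q)_{k-h-1}. -/

import Mathlib

/-- A partition: a weakly decreasing list of positive integers. -/
def PartList (L : List ℕ) : Prop := L.Pairwise (· ≥ ·) ∧ ∀ x ∈ L, 0 < x

/-- A partition of `n`. -/
def PartitionOf (n : ℕ) (L : List ℕ) : Prop := PartList L ∧ L.sum = n

/-- `L` has an `h`-fixed hook at 0-indexed position `i` (i.e. row `i+1`):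
the first-column hook length `λ_{i+1} + length - (i+1)` equals `(i+1) + h`. -/
def FixedHook (h : ℤ) (L : List ℕ) (i : ℕ) : Prop :=
  ∃ hi : i < L.length, (L.get ⟨i, hi⟩ : ℤ) + L.length - (i + 1) = (i + 1) + h

/-- `h`-fixed hook at row `i+1` arising from a part of size `k`. -/
def FixedHookPart (h : ℤ) (k : ℕ) (L : List ℕ) (i : ℕ) : Prop :=
  ∃ hi : i < L.length, L.get ⟨i, hi⟩ = k ∧ (k : ℤ) + L.length - (i + 1) = (i + 1) + h

open PowerSeries in
/-- The finite q-Pochhammer symbol `(q)_a = ∏_{k=1}^a (1 - q^k)` as a power series in `q = X`. -/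
noncomputable def poch (a : ℕ) : PowerSeries ℚ :=
  ∏ k ∈ Finset.range a, (1 - (X : PowerSeries ℚ) ^ (k + 1))

/-- The Gaussian binomial coefficient `[A choose B]_q = (q)_A / ((q)_B (q)_{A-B})`. -/
noncomputable def gauss (A B : ℕ) : PowerSeries ℚ := poch A * (poch B)⁻¹ * (poch (A - B))⁻¹

open PowerSeries in
/-- The infinite product `(q^m; q)_∞ = ∏_{k≥0} (1 - q^{m+k})`, defined coefficientwise
(the coefficient of `q^n` stabilizes in the finite partial products). -/
noncomputable def pochShiftInf (m : ℕ) : PowerSeries ℚ :=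
  PowerSeries.mk fun n =>
    coeff n (∏ k ∈ Finset.range (n + 1), (1 - (X : PowerSeries ℚ) ^ (m + k)))

open PowerSeries

open PowerSeries

section Counting

lemma getD_eq_get_old (l : List ℕ) (d : ℕ) {n : ℕ} (hn : n < l.length) :
    l.getD n d = l.get ⟨n, hn⟩ := List.getD_eq_getElem l d hn

variable {α β : Type*}

lemma finite_sub (P Q : α → Prop) [Finite {a // P a}] : Finite {a // P a ∧ Q a} := by
  refine Finite.of_injective (fun x => (⟨x.1, x.2.1⟩ : {a // P a})) ?_
  intro x y hxy
  exact Subtype.ext (congrArg (Subtype.val : {a // P a} → α) hxy)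

lemma card_split (P Q : α → Prop) [Finite {a // P a}] :
    Nat.card {a // P a} = Nat.card {a // P a ∧ Q a} + Nat.card {a // P a ∧ ¬ Q a} := by
  classical
  have e3 : {x : {a // P a} // Q x.1} ⊕ {x : {a // P a} // ¬ Q x.1} ≃ {a // P a} :=
    Equiv.sumCompl _
  have e1 : {x : {a // P a} // Q x.1} ≃ {a // P a ∧ Q a} :=
    Equiv.subtypeSubtypeEquivSubtypeInter P Q
  have e2 : {x : {a // P a} // ¬ Q x.1} ≃ {a // P a ∧ ¬ Q a} :=
    Equiv.subtypeSubtypeEquivSubtypeInter P (fun a => ¬ Q a)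
  have : Finite {x : {a // P a} // Q x.1} := Subtype.finite
  have : Finite {x : {a // P a} // ¬ Q x.1} := Subtype.finite
  rw [← Nat.card_congr e3, Nat.card_sum, Nat.card_congr e1, Nat.card_congr e2]

lemma card_fiber_sum [DecidableEq β] (f : α → β) (s : Finset β) :
    ∀ (P : α → Prop), Finite {a // P a} → (∀ a, P a → f a ∈ s) →
      Nat.card {a // P a} = ∑ b ∈ s, Nat.card {a // P a ∧ f a = b} := by
  classical
  induction s using Finset.induction_on with
  | empty =>
    intro P _ hs
    have : IsEmpty {a // P a} := ⟨fun x => by simpa using hs x.1 x.2⟩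
    simp [Nat.card_of_isEmpty]
  | @insert b s hb ih =>
    intro P hfin hs
    rw [Finset.sum_insert hb, card_split P (fun a => f a = b)]
    congr 1
    have hfin2 : Finite {a // P a ∧ ¬ f a = b} := finite_sub _ _
    have hs2 : ∀ a, (P a ∧ ¬ f a = b) → f a ∈ s := by
      intro a ha
      rcases Finset.mem_insert.mp (hs a ha.1) with h | h
      · exact absurd h ha.2
      · exact h
    rw [ih _ hfin2 hs2]
    refine Finset.sum_congr rfl fun c hc => Nat.card_congr (Equiv.subtypeEquivRight ?_)
    intro a
    have hcb : c ≠ b := fun hcb => hb (hcb ▸ hc)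
    constructor
    · rintro ⟨⟨hP, _⟩, hfc⟩; exact ⟨hP, hfc⟩
    · rintro ⟨hP, hfc⟩; exact ⟨⟨hP, fun hfb => hcb (hfb ▸ hfc ▸ rfl)⟩, hfc⟩

lemma listFinite {P : List ℕ → Prop} {m n : ℕ}
    (h : ∀ L, P L → L.length ≤ m ∧ ∀ x ∈ L, x ≤ n) :
    Finite {L // P L} := by
  classical
  have key : ∀ (A : List ℕ), (∀ x ∈ A, 0 < x ∧ x ≤ n + 1) → A.length ≤ m →
      ∀ (B : List ℕ), (∀ x ∈ B, 0 < x ∧ x ≤ n + 1) → B.length ≤ m →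
      (∀ i : Fin m, A.getD i 0 = B.getD i 0) → A = B := by
    intro A hA hAm B hB hBm hiff
    have hlen : A.length = B.length := by
      by_contra hne
      wlog hlt : A.length < B.length generalizing A B
      · exact this B hB hBm A hA hAm (fun i => (hiff i).symm) (Ne.symm hne) (by omega)
      have h0 := hiff ⟨A.length, by omega⟩
      rw [List.getD_eq_default _ _ (by simp), getD_eq_get_old _ _ (by simpa using hlt)] at h0
      exact absurd h0.symm (hB _ (B.get_mem _)).1.ne'
    refine List.ext_get hlen fun i h1 h2 => ?_
    have := hiff ⟨i, by omega⟩
    rwa [getD_eq_get_old _ _ (by simpa using h1), getD_eq_get_old _ _ (by simpa using h2)] at this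
  have bound : ∀ (L : {L // P L}) (i : ℕ), (L.1.map Nat.succ).getD i 0 < n + 2 := by
    intro L i
    rcases Nat.lt_or_ge i (L.1.map Nat.succ).length with hi | hi
    · rw [getD_eq_get_old _ _ hi]
      have hmem := List.get_mem (L.1.map Nat.succ) ⟨i, hi⟩
      rw [List.mem_map] at hmem
      obtain ⟨y, hy, hxy⟩ := hmem
      have := (h L.1 L.2).2 y hy
      omega
    · rw [List.getD_eq_default _ _ hi]; omega
  have hmemprop : ∀ (L : {L // P L}), ∀ x ∈ L.1.map Nat.succ, 0 < x ∧ x ≤ n + 1 := by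
    intro L x hx
    rw [List.mem_map] at hx
    obtain ⟨y, hy, rfl⟩ := hx
    have := (h L.1 L.2).2 y hy
    omega
  have hlenprop : ∀ (L : {L // P L}), (L.1.map Nat.succ).length ≤ m := by
    intro L; rw [List.length_map]; exact (h L.1 L.2).1
  refine Finite.of_injective (fun L : {L // P L} => (fun i : Fin m =>
    (⟨(L.1.map Nat.succ).getD i 0, bound L i⟩ : Fin (n + 2)))) ?_
  intro L1 L2 hL
  have heq : L1.1.map Nat.succ = L2.1.map Nat.succ := by
    refine key _ (hmemprop L1) (hlenprop L1) _ (hmemprop L2) (hlenprop L2) fun i => ?_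
    have := congrFun hL i
    exact congrArg Fin.val this
  exact Subtype.ext (List.map_injective_iff.mpr Nat.succ_injective heq)

end Counting

section ListHelpers

lemma sum_map_add (c : ℕ) (L : List ℕ) : (L.map (· + c)).sum = L.sum + c * L.length := by
  induction L with
  | nil => simp
  | cons a T ih =>
    simp only [List.map_cons, List.sum_cons, List.length_cons, ih, Nat.mul_succ]
    omega

lemma sum_map_sub (c : ℕ) (L : List ℕ) (h : ∀ x ∈ L, c ≤ x) :
    (L.map (· - c)).sum + c * L.length = L.sum := by
  induction L with
  | nil => simp
  | cons a T ih =>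
    have h1 := h a (by simp)
    have h2 := ih (fun x hx => h x (by simp [hx]))
    simp only [List.map_cons, List.sum_cons, List.length_cons, Nat.mul_succ]
    omega

lemma sorted_map_sub (c : ℕ) {L : List ℕ} (h : L.Pairwise (· ≥ ·)) :
    (L.map (· - c)).Pairwise (· ≥ ·) :=
  h.map _ (fun _ _ hab => Nat.sub_le_sub_right hab c)

lemma sorted_map_add (c : ℕ) {L : List ℕ} (h : L.Pairwise (· ≥ ·)) :
    (L.map (· + c)).Pairwise (· ≥ ·) :=
  h.map _ (fun _ _ hab => Nat.add_le_add_right hab c)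

lemma sorted_take_drop {L : List ℕ} (h : L.Pairwise (· ≥ ·)) (i : ℕ) :
    ∀ x ∈ L.take i, ∀ y ∈ L.drop i, y ≤ x := by
  have h2 : ((L.take i) ++ (L.drop i)).Pairwise (· ≥ ·) := by
    rw [List.take_append_drop]; exact h
  exact fun x hx y hy => (List.pairwise_append.mp h2).2.2 x hx y hy

lemma get_le_take {L : List ℕ} (h : L.Pairwise (· ≥ ·)) {t : ℕ} (ht : t < L.length) :
    ∀ x ∈ L.take t, L.get ⟨t, ht⟩ ≤ x := by
  intro x hx
  refine sorted_take_drop h t x hx _ ?_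
  rw [List.drop_eq_getElem_cons ht]
  exact List.mem_cons_self

lemma drop_le_get {L : List ℕ} (h : L.Pairwise (· ≥ ·)) {t : ℕ} (ht : t < L.length) :
    ∀ y ∈ L.drop (t + 1), y ≤ L.get ⟨t, ht⟩ := by
  intro y hy
  have h2 : (L.drop t).Pairwise (· ≥ ·) := h.sublist (List.drop_sublist t L)
  rw [List.drop_eq_getElem_cons ht] at h2
  exact (List.pairwise_cons.mp h2).1 y hy

lemma sum_decomp {L : List ℕ} {t : ℕ} (ht : t < L.length) :
    L.sum = (L.take t).sum + L.get ⟨t, ht⟩ + (L.drop (t + 1)).sum := by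
  conv_lhs => rw [← List.take_append_drop t L]
  rw [List.sum_append, List.drop_eq_getElem_cons ht, List.sum_cons]
  simp only [List.get_eq_getElem]
  ring

lemma getLast_le {L : List ℕ} (hs : L.Pairwise (· ≥ ·)) (hL : L ≠ []) :
    ∀ x ∈ L, L.getLast hL ≤ x := by
  induction L with
  | nil => exact absurd rfl hL
  | cons a T ih =>
    intro x hx
    rcases eq_or_ne T [] with rfl | hT
    · simp at hx
      simp [hx]
    · rw [List.getLast_cons hT]
      have hT' : T.Pairwise (· ≥ ·) := (List.pairwise_cons.mp hs).2
      rcases List.mem_cons.mp hx with rfl | h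
      · exact (List.pairwise_cons.mp hs).1 _ (List.getLast_mem hT)
      · exact ih hT' hT x h

lemma le_head {L : List ℕ} (hs : L.Pairwise (· ≥ ·)) (hL : L ≠ []) :
    ∀ x ∈ L, x ≤ L.head hL := by
  cases L with
  | nil => exact absurd rfl hL
  | cons a T =>
    intro x hx
    rcases List.mem_cons.mp hx with rfl | h
    · exact le_refl _
    · exact (List.pairwise_cons.mp hs).1 x h

lemma length_le_sum {L : List ℕ} (h : ∀ x ∈ L, 0 < x) : L.length ≤ L.sum := by
  induction L with
  | nil => simp
  | cons a T ih =>
    have h1 := h a (by simp)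
    have h2 := ih (fun x hx => h x (by simp [hx]))
    simp only [List.length_cons, List.sum_cons]
    omega

end ListHelpers
section Defs

def Aty (a : ℕ) (L : List ℕ) : Prop := L.Pairwise (· ≥ ·) ∧ L.length = a

def Bty (m c : ℕ) (L : List ℕ) : Prop := L.Pairwise (· ≥ ·) ∧ L.length = m ∧ ∀ x ∈ L, x ≤ c

noncomputable def mkA (a : ℕ) : PowerSeries ℚ :=
  PowerSeries.mk fun n => (Nat.card {L : List ℕ // Aty a L ∧ L.sum = n} : ℚ)

noncomputable def mkB (m c : ℕ) : PowerSeries ℚ :=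
  PowerSeries.mk fun n => (Nat.card {L : List ℕ // Bty m c L ∧ L.sum = n} : ℚ)

lemma finA (a n : ℕ) : Finite {L : List ℕ // Aty a L ∧ L.sum = n} :=
  listFinite (m := a) (n := n) fun L hL => ⟨hL.1.2.le, fun x hx => hL.2 ▸ List.le_sum_of_mem hx⟩

lemma finB (m c n : ℕ) : Finite {L : List ℕ // Bty m c L ∧ L.sum = n} :=
  listFinite (m := m) (n := c) fun L hL => ⟨hL.1.2.1.le, hL.1.2.2⟩

lemma mkA_zero : mkA 0 = 1 := by
  ext n
  rw [mkA, coeff_mk, coeff_one]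
  split_ifs with hn
  · subst hn
    have : Unique {L : List ℕ // Aty 0 L ∧ L.sum = 0} := by
      refine ⟨⟨⟨[], ⟨List.Pairwise.nil, rfl⟩, rfl⟩⟩, ?_⟩
      rintro ⟨L, ⟨⟨_, hlen⟩, _⟩⟩
      exact Subtype.ext (List.length_eq_zero_iff.mp hlen)
    rw [Nat.card_unique]; norm_num
  · have : IsEmpty {L : List ℕ // Aty 0 L ∧ L.sum = n} := by
      refine ⟨fun x => hn ?_⟩
      obtain ⟨L, ⟨⟨_, hlen⟩, hsum⟩⟩ := x
      rw [List.length_eq_zero_iff.mp hlen] at hsum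
      simpa using hsum.symm
    rw [Nat.card_of_isEmpty]; norm_num

lemma mkB_zero_left (c : ℕ) : mkB 0 c = 1 := by
  ext n
  rw [mkB, coeff_mk, coeff_one]
  split_ifs with hn
  · subst hn
    have : Unique {L : List ℕ // Bty 0 c L ∧ L.sum = 0} := by
      refine ⟨⟨⟨[], ⟨List.Pairwise.nil, rfl, by simp⟩, rfl⟩⟩, ?_⟩
      rintro ⟨L, ⟨⟨_, hlen, _⟩, _⟩⟩
      exact Subtype.ext (List.length_eq_zero_iff.mp hlen)
    rw [Nat.card_unique]; norm_num
  · have : IsEmpty {L : List ℕ // Bty 0 c L ∧ L.sum = n} := by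
      refine ⟨fun x => hn ?_⟩
      obtain ⟨L, ⟨⟨_, hlen, _⟩, hsum⟩⟩ := x
      rw [List.length_eq_zero_iff.mp hlen] at hsum
      simpa using hsum.symm
    rw [Nat.card_of_isEmpty]; norm_num

lemma mkB_zero_right (m : ℕ) : mkB m 0 = 1 := by
  ext n
  rw [mkB, coeff_mk, coeff_one]
  split_ifs with hn
  · subst hn
    have : Unique {L : List ℕ // Bty m 0 L ∧ L.sum = 0} := by
      refine ⟨⟨⟨List.replicate m 0, ⟨List.pairwise_replicate.mpr (Or.inr (le_refl (0:ℕ))),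
        List.length_replicate .., fun x hx => by
          rw [List.eq_of_mem_replicate hx]⟩, by simp⟩⟩, ?_⟩
      rintro ⟨L, ⟨⟨_, hlen, hb⟩, _⟩⟩
      refine Subtype.ext (List.eq_replicate_iff.mpr ⟨hlen, fun b hb2 => Nat.le_zero.mp (hb b hb2)⟩)
    rw [Nat.card_unique]; norm_num
  · have : IsEmpty {L : List ℕ // Bty m 0 L ∧ L.sum = n} := by
      refine ⟨fun x => hn ?_⟩
      obtain ⟨L, ⟨⟨_, _, hb⟩, hsum⟩⟩ := x
      rw [List.sum_eq_zero (fun x hx => Nat.le_zero.mp (hb x hx))] at hsum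
      exact hsum.symm
    rw [Nat.card_of_isEmpty]; norm_num

lemma mkA_rec (a : ℕ) : mkA (a + 1) = mkA a + (X : PowerSeries ℚ) ^ (a + 1) * mkA (a + 1) := by
  ext n
  rw [map_add, coeff_X_pow_mul']
  simp only [mkA, coeff_mk]
  have hfin : Finite {L : List ℕ // Aty (a + 1) L ∧ L.sum = n} := finA _ _
  have hsplit := card_split (fun L => Aty (a + 1) L ∧ L.sum = n) (fun L => ∀ x ∈ L, 0 < x)
  have hdropfacts : ∀ (L : List ℕ), (Aty (a + 1) L ∧ L.sum = n) → ¬(∀ x ∈ L, 0 < x) →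
      (Aty a L.dropLast ∧ L.dropLast.sum = n) ∧ ∃ hne : L ≠ [], L.getLast hne = 0 := by
    rintro L ⟨⟨hsort, hlen⟩, hsum⟩ hnp
    have hne : L ≠ [] := by intro h; rw [h] at hlen; simp at hlen
    have hlast : L.getLast hne = 0 := by
      push_neg at hnp
      obtain ⟨x, hx, hx0⟩ := hnp
      have := getLast_le hsort hne x hx
      omega
    have hsum2 : L.sum = L.dropLast.sum := by
      conv_lhs => rw [← List.dropLast_append_getLast hne]
      rw [List.sum_append, hlast]; simp
    have hld := List.length_dropLast (xs := L)
    exact ⟨⟨⟨hsort.sublist (List.dropLast_sublist _), by omega⟩, by omega⟩, hne, hlast⟩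
  have E1 : {L : List ℕ // (Aty (a + 1) L ∧ L.sum = n) ∧ ¬ ∀ x ∈ L, 0 < x} ≃
      {M : List ℕ // Aty a M ∧ M.sum = n} :=
    { toFun := fun L => ⟨L.1.dropLast, (hdropfacts L.1 L.2.1 L.2.2).1⟩
      invFun := fun M => ⟨M.1 ++ [0], by
        obtain ⟨⟨hsort, hlen⟩, hsum⟩ := M.2
        refine ⟨⟨⟨?_, by simp [hlen]⟩, by simp [hsum]⟩, ?_⟩
        · exact List.pairwise_append.mpr ⟨hsort, List.pairwise_singleton _ _,
            fun x _ y hy => by simp at hy; omega⟩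
        · intro hall
          have := hall 0 (by simp)
          omega⟩
      left_inv := fun L => Subtype.ext (by
        obtain ⟨hne, hlast⟩ := (hdropfacts L.1 L.2.1 L.2.2).2
        conv_rhs => rw [← List.dropLast_append_getLast hne]
        rw [hlast])
      right_inv := fun M => Subtype.ext (List.dropLast_concat ..) }
  have E2val : Nat.card {L : List ℕ // (Aty (a + 1) L ∧ L.sum = n) ∧ ∀ x ∈ L, 0 < x}
      = if a + 1 ≤ n then Nat.card {M : List ℕ // Aty (a + 1) M ∧ M.sum = n - (a + 1)}
        else 0 := by
    split_ifs with hcase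
    · refine Nat.card_congr
        { toFun := fun L => ⟨L.1.map (· - 1), by
            obtain ⟨⟨⟨hsort, hlen⟩, hsum⟩, hpos⟩ := L.2
            have hs := sum_map_sub 1 L.1 (fun x hx => hpos x hx)
            refine ⟨⟨sorted_map_sub 1 hsort, by simp [hlen]⟩, ?_⟩
            rw [hlen] at hs; omega⟩
          invFun := fun M => ⟨M.1.map (· + 1), by
            obtain ⟨⟨hsort, hlen⟩, hsum⟩ := M.2
            have hs := sum_map_add 1 M.1
            refine ⟨⟨⟨sorted_map_add 1 hsort, by simp [hlen]⟩, by
              rw [hs, hlen, hsum]; omega⟩, ?_⟩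
            intro x hx
            rw [List.mem_map] at hx
            obtain ⟨y, _, rfl⟩ := hx
            omega⟩
          left_inv := fun L => Subtype.ext (by
            obtain ⟨⟨⟨hsort, hlen⟩, hsum⟩, hpos⟩ := L.2
            simp only [List.map_map]
            have : ∀ x ∈ L.1, ((· + 1) ∘ (· - 1)) x = id x := by
              intro x hx; have := hpos x hx; simp; omega
            rw [List.map_congr_left this, List.map_id])
          right_inv := fun M => Subtype.ext (by
            simp only [List.map_map]
            have : ∀ x ∈ M.1, ((· - 1) ∘ (· + 1)) x = id x := by intro x _; simp
            rw [List.map_congr_left this, List.map_id]) }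
    · have : IsEmpty {L : List ℕ // (Aty (a + 1) L ∧ L.sum = n) ∧ ∀ x ∈ L, 0 < x} := by
        refine ⟨fun L => ?_⟩
        obtain ⟨⟨⟨hsort, hlen⟩, hsum⟩, hpos⟩ := L.2
        have := length_le_sum hpos
        omega
      exact Nat.card_of_isEmpty
  rw [hsplit, Nat.card_congr E1, E2val]
  push_cast [apply_ite (Nat.cast : ℕ → ℚ)]
  split_ifs <;> ring

lemma mkB_rec (m c : ℕ) :
    mkB (m + 1) (c + 1) = mkB (m + 1) c + (X : PowerSeries ℚ) ^ (c + 1) * mkB m (c + 1) := by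
  ext n
  rw [map_add, coeff_X_pow_mul']
  simp only [mkB, coeff_mk]
  have hfin : Finite {L : List ℕ // Bty (m + 1) (c + 1) L ∧ L.sum = n} := finB _ _ _
  have hsplit := card_split (fun L => Bty (m + 1) (c + 1) L ∧ L.sum = n)
    (fun L => ∀ x ∈ L, x ≤ c)
  have E1 : {L : List ℕ // (Bty (m + 1) (c + 1) L ∧ L.sum = n) ∧ ∀ x ∈ L, x ≤ c} ≃
      {L : List ℕ // Bty (m + 1) c L ∧ L.sum = n} := by
    refine Equiv.subtypeEquivRight fun L => ?_
    constructor
    · rintro ⟨⟨⟨hs, hl, _⟩, hsum⟩, hb⟩; exact ⟨⟨hs, hl, hb⟩, hsum⟩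
    · rintro ⟨⟨hs, hl, hb⟩, hsum⟩
      exact ⟨⟨⟨hs, hl, fun x hx => (hb x hx).trans (by omega)⟩, hsum⟩, hb⟩
  have hheadfacts : ∀ (L : List ℕ), (Bty (m + 1) (c + 1) L ∧ L.sum = n) →
      ¬(∀ x ∈ L, x ≤ c) → ∃ hne : L ≠ [], L.head hne = c + 1 ∧
        (Bty m (c + 1) L.tail ∧ L.tail.sum = n - (c + 1)) ∧ c + 1 ≤ n := by
    rintro L ⟨⟨hsort, hlen, hb⟩, hsum⟩ hnb
    have hne : L ≠ [] := by intro h; rw [h] at hlen; simp at hlen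
    push_neg at hnb
    obtain ⟨x, hx, hxc⟩ := hnb
    have hhead : L.head hne = c + 1 := by
      have h1 := le_head hsort hne x hx
      have h2 := hb _ (List.head_mem hne)
      omega
    have hdec : L.head hne :: L.tail = L := List.cons_head_tail hne
    have hsum2 : L.sum = (c + 1) + L.tail.sum := by
      conv_lhs => rw [← hdec]
      rw [List.sum_cons, hhead]
    have hlt : L.tail.length = m := by
      have := List.length_tail (l := L)
      omega
    refine ⟨hne, hhead, ⟨⟨⟨hsort.sublist (List.tail_sublist _), hlt,
      fun y hy => hb y (List.mem_of_mem_tail hy)⟩, by omega⟩, by omega⟩⟩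
  have E2val : Nat.card {L : List ℕ // (Bty (m + 1) (c + 1) L ∧ L.sum = n) ∧
        ¬ ∀ x ∈ L, x ≤ c}
      = if c + 1 ≤ n then Nat.card {M : List ℕ // Bty m (c + 1) M ∧ M.sum = n - (c + 1)}
        else 0 := by
    split_ifs with hcase
    · refine Nat.card_congr
        { toFun := fun L => ⟨L.1.tail, by
            obtain ⟨hne, _, hrest, _⟩ := hheadfacts L.1 L.2.1 L.2.2
            exact hrest⟩
          invFun := fun M => ⟨(c + 1) :: M.1, by
            obtain ⟨⟨hsort, hlen, hb⟩, hsum⟩ := M.2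
            refine ⟨⟨⟨List.pairwise_cons.mpr ⟨fun y hy => hb y hy, hsort⟩, by simp [hlen], ?_⟩,
              ?_⟩, ?_⟩
            · intro x hx
              rcases List.mem_cons.mp hx with rfl | h
              · exact le_refl _
              · exact hb x h
            · rw [List.sum_cons, hsum]; omega
            · intro hall
              have := hall (c + 1) (List.mem_cons_self)
              omega⟩
          left_inv := fun L => Subtype.ext (by
            obtain ⟨hne, hhead, _, _⟩ := hheadfacts L.1 L.2.1 L.2.2
            conv_rhs => rw [← List.cons_head_tail hne]
            rw [hhead])
          right_inv := fun M => Subtype.ext rfl }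
    · have : IsEmpty {L : List ℕ // (Bty (m + 1) (c + 1) L ∧ L.sum = n) ∧
          ¬ ∀ x ∈ L, x ≤ c} := by
        refine ⟨fun L => ?_⟩
        obtain ⟨_, _, _, hle⟩ := hheadfacts L.1 L.2.1 L.2.2
        omega
      exact Nat.card_of_isEmpty
  rw [hsplit, Nat.card_congr E1, E2val]
  push_cast [apply_ite (Nat.cast : ℕ → ℚ)]
  split_ifs <;> ring

lemma poch_zero : poch 0 = 1 := by simp [poch]

lemma poch_succ (a : ℕ) : poch (a + 1) = poch a * (1 - (X : PowerSeries ℚ) ^ (a + 1)) :=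
  Finset.prod_range_succ _ a

lemma constCoeff_poch (a : ℕ) : constantCoeff (poch a) = 1 := by
  induction a with
  | zero => rw [poch_zero]; simp
  | succ a ih =>
    rw [poch_succ, map_mul, ih, one_mul, map_sub, map_one, map_pow, constantCoeff_X]
    simp

lemma constCoeff_poch_ne (a : ℕ) : constantCoeff (poch a) ≠ 0 := by
  rw [constCoeff_poch]; exact one_ne_zero

lemma mkA_mul_poch (a : ℕ) : mkA a * poch a = 1 := by
  induction a with
  | zero => rw [mkA_zero, poch_zero, one_mul]
  | succ a ih =>
    have h := mkA_rec a
    have h2 : mkA (a + 1) * (1 - (X : PowerSeries ℚ) ^ (a + 1)) = mkA a := by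
      linear_combination h
    rw [poch_succ,
      show mkA (a + 1) * (poch a * (1 - (X : PowerSeries ℚ) ^ (a + 1)))
        = (mkA (a + 1) * (1 - (X : PowerSeries ℚ) ^ (a + 1))) * poch a from by ring,
      h2, ih]

lemma poch_inv_eq (a : ℕ) : (poch a)⁻¹ = mkA a :=
  (PowerSeries.inv_eq_iff_mul_eq_one (constCoeff_poch_ne a)).mpr (mkA_mul_poch a)

lemma mkB_poch : ∀ N m c, m + c ≤ N → mkB m c * poch c * poch m = poch (m + c) := by
  intro N
  induction N with
  | zero =>
    intro m c hmc
    have hm : m = 0 := by omega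
    have hc : c = 0 := by omega
    subst hm; subst hc
    rw [mkB_zero_left, poch_zero, one_mul, mul_one]
  | succ N ih =>
    intro m c hmc
    match m, c with
    | 0, c => rw [mkB_zero_left, poch_zero, one_mul, mul_one, Nat.zero_add]
    | m + 1, 0 => rw [mkB_zero_right, poch_zero, mul_one, one_mul, Nat.add_zero]
    | m + 1, c + 1 =>
      have h1 := ih (m + 1) c (by omega)
      have h2 := ih m (c + 1) (by omega)
      rw [poch_succ m] at h1
      rw [show m + (c + 1) = (m + 1) + c from by omega, poch_succ c] at h2
      rw [mkB_rec, show (m + 1) + (c + 1) = ((m + 1) + c) + 1 from by omega,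
        poch_succ ((m + 1) + c), poch_succ c, poch_succ m]
      linear_combination (1 - (X : PowerSeries ℚ) ^ (c + 1)) * h1
        + (X : PowerSeries ℚ) ^ (c + 1) * (1 - (X : PowerSeries ℚ) ^ (m + 1)) * h2

lemma gauss_eq_mkB (m c : ℕ) : gauss (m + c) c = mkB m c := by
  rw [gauss, show m + c - c = m from by omega, ← mkB_poch (m + c) m c le_rfl]
  calc (mkB m c * poch c * poch m) * (poch c)⁻¹ * (poch m)⁻¹
      = mkB m c * (poch c * (poch c)⁻¹) * (poch m * (poch m)⁻¹) := by ring
    _ = mkB m c := by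
        rw [PowerSeries.mul_inv_cancel _ (constCoeff_poch_ne c),
          PowerSeries.mul_inv_cancel _ (constCoeff_poch_ne m), mul_one, mul_one]

end Defs
section Main

lemma finite_pair {P Q : List ℕ → Prop} {R : List ℕ × List ℕ → Prop}
    (h1 : Finite {a : List ℕ // P a}) (h2 : Finite {b : List ℕ // Q b})
    (hR : ∀ p, R p → P p.1 ∧ Q p.2) : Finite {p : List ℕ × List ℕ // R p} := by
  refine Finite.of_injective (fun x => ((⟨x.1.1, (hR x.1 x.2).1⟩ : {a : List ℕ // P a}),
    (⟨x.1.2, (hR x.1 x.2).2⟩ : {b : List ℕ // Q b}))) ?_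
  intro x y hxy
  apply Subtype.ext
  apply Prod.ext
  · exact congrArg (fun z : {a : List ℕ // P a} × {b : List ℕ // Q b} => z.1.1) hxy
  · exact congrArg (fun z : {a : List ℕ // P a} × {b : List ℕ // Q b} => z.2.1) hxy

lemma conv_card (e n : ℕ) (P Q : List ℕ → Prop)
    (hfin : Finite {p : List ℕ × List ℕ // P p.1 ∧ Q p.2 ∧ p.1.sum + p.2.sum + e = n}) :
    Nat.card {p : List ℕ × List ℕ // P p.1 ∧ Q p.2 ∧ p.1.sum + p.2.sum + e = n}
      = if e ≤ n then ∑ ab ∈ Finset.HasAntidiagonal.antidiagonal (n - e),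
          Nat.card {L : List ℕ // P L ∧ L.sum = ab.1} *
            Nat.card {L : List ℕ // Q L ∧ L.sum = ab.2}
        else 0 := by
  split_ifs with hcase
  · rw [card_fiber_sum (fun p : List ℕ × List ℕ => (p.1.sum, p.2.sum))
      (Finset.HasAntidiagonal.antidiagonal (n - e)) _ hfin
      (fun p hp => Finset.HasAntidiagonal.mem_antidiagonal.mpr
        (show p.1.sum + p.2.sum = n - e by omega))]
    refine Finset.sum_congr rfl fun ab hab => ?_
    have hab' := Finset.HasAntidiagonal.mem_antidiagonal.mp hab
    rw [← Nat.card_prod]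
    refine Nat.card_congr ((Equiv.subtypeEquivRight ?_).trans Equiv.subtypeProdEquivProd)
    intro p
    constructor
    · rintro ⟨⟨hP, hQ, hsum⟩, hab2⟩
      have h1 : p.1.sum = ab.1 := congrArg Prod.fst hab2
      have h2 : p.2.sum = ab.2 := congrArg Prod.snd hab2
      exact ⟨⟨hP, h1⟩, hQ, h2⟩
    · rintro ⟨⟨hP, h1⟩, hQ, h2⟩
      exact ⟨⟨hP, hQ, by omega⟩, Prod.ext h1 h2⟩
  · have : IsEmpty {p : List ℕ × List ℕ // P p.1 ∧ Q p.2 ∧ p.1.sum + p.2.sum + e = n} :=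
      ⟨fun p => by have := p.2.2.2; omega⟩
    exact Nat.card_of_isEmpty

lemma hook_iff (h : ℤ) (k t : ℕ) (ht : (t : ℤ) = (k : ℤ) - h - 1) (L : List ℕ) :
    (∃ i, ∃ hi : i < L.length,
        ((L.get ⟨i, hi⟩ : ℤ) + L.length - (i + 1) = (i + 1) + h ∧
          (L.get ⟨i, hi⟩ : ℤ) + L.length - (i + 1) = k))
      ↔ (t < L.length ∧ L.getD t 0 + L.length = k + t + 1) := by
  constructor
  · rintro ⟨i, hi, e1, e2⟩
    have hit : i = t := by omega
    subst hit
    refine ⟨hi, ?_⟩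
    rw [getD_eq_get_old _ _ hi]
    omega
  · rintro ⟨hlt, heq⟩
    rw [getD_eq_get_old _ _ hlt] at heq
    exact ⟨t, hlt, by omega, by omega⟩

noncomputable def slice_equiv (k t l n : ℕ) (hl1 : 1 ≤ l) (hlk : l ≤ k) :
    {L : List ℕ // (PartitionOf n L ∧ t < L.length ∧ L.getD t 0 + L.length = k + t + 1) ∧
        L.getD t 0 = l} ≃
    {p : List ℕ × List ℕ // Bty (k - l) (l - 1) p.1 ∧ Aty t p.2 ∧
        p.1.sum + p.2.sum + (k + l * t) = n} := by
  have key : ∀ L : List ℕ,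
      ((PartitionOf n L ∧ t < L.length ∧ L.getD t 0 + L.length = k + t + 1) ∧
        L.getD t 0 = l) →
      ∃ ht : t < L.length, L.get ⟨t, ht⟩ = l ∧ L.length = t + 1 + (k - l) ∧
        (Bty (k - l) (l - 1) ((L.drop (t + 1)).map (· - 1)) ∧
          Aty t ((L.take t).map (· - l)) ∧
          ((L.drop (t + 1)).map (· - 1)).sum + ((L.take t).map (· - l)).sum
            + (k + l * t) = n) := by
    rintro L ⟨⟨⟨⟨hsort, hpos⟩, hsum⟩, hlt, heq⟩, hgetD⟩
    rw [getD_eq_get_old _ _ hlt] at heq hgetD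
    refine ⟨hlt, hgetD, by omega, ?_⟩
    have hdl : (L.drop (t + 1)).length = k - l := by rw [List.length_drop]; omega
    have htl : (L.take t).length = t := by rw [List.length_take]; omega
    have hdropmem : ∀ y ∈ L.drop (t + 1), y ∈ L := fun y hy => List.mem_of_mem_drop hy
    have htakemem : ∀ y ∈ L.take t, y ∈ L := fun y hy => List.mem_of_mem_take hy
    have hdle : ∀ y ∈ L.drop (t + 1), y ≤ l := fun y hy => hgetD ▸ drop_le_get hsort hlt y hy
    have hdpos : ∀ y ∈ L.drop (t + 1), 1 ≤ y := fun y hy => hpos y (hdropmem y hy)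
    have htge : ∀ y ∈ L.take t, l ≤ y := fun y hy => hgetD ▸ get_le_take hsort hlt y hy
    have hs1 := sum_map_sub 1 (L.drop (t + 1)) hdpos
    have hs2 := sum_map_sub l (L.take t) htge
    rw [hdl] at hs1
    rw [htl] at hs2
    have hdecomp := sum_decomp hlt
    rw [hgetD] at hdecomp
    refine ⟨⟨sorted_map_sub 1 (hsort.sublist (List.drop_sublist _ _)),
        by rw [List.length_map, hdl], ?_⟩,
      ⟨sorted_map_sub l (hsort.sublist (List.take_sublist _ _)),
        by rw [List.length_map, htl]⟩, ?_⟩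
    · intro x hx
      rw [List.mem_map] at hx
      obtain ⟨y, hy, rfl⟩ := hx
      have := hdle y hy
      omega
    · omega
  refine
    { toFun := fun L => ⟨((L.1.drop (t + 1)).map (· - 1), (L.1.take t).map (· - l)), by
        obtain ⟨ht, hget, hlen, hB, hA, hsum⟩ := key L.1 L.2
        exact ⟨hB, hA, hsum⟩⟩
      invFun := fun p => ⟨(p.1.2.map (· + l)) ++ l :: (p.1.1.map (· + 1)), by
        obtain ⟨⟨hsB, hlB, hbB⟩, ⟨hsA, hlA⟩, hsum⟩ := p.2
        have hlenA : (p.1.2.map (· + l)).length = t := by simp [hlA]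
        have hlenB : (p.1.1.map (· + 1)).length = k - l := by simp [hlB]
        have hBle : ∀ y ∈ p.1.1.map (· + 1), y ≤ l := by
          intro y hy
          rw [List.mem_map] at hy
          obtain ⟨x, hx, rfl⟩ := hy
          have := hbB x hx
          omega
        have hAge : ∀ y ∈ p.1.2.map (· + l), l ≤ y := by
          intro y hy
          rw [List.mem_map] at hy
          obtain ⟨x, hx, rfl⟩ := hy
          omega
        have hsum1 := sum_map_add l p.1.2
        have hsum2 := sum_map_add 1 p.1.1
        rw [hlA] at hsum1
        rw [hlB] at hsum2
        have hlenL : ((p.1.2.map (· + l)) ++ l :: (p.1.1.map (· + 1))).length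
            = t + 1 + (k - l) := by
          simp [hlenA, hlenB]; omega
        have hgetD : ((p.1.2.map (· + l)) ++ l :: (p.1.1.map (· + 1))).getD t 0 = l := by
          rw [List.getD_append_right _ _ _ _ (le_of_eq hlenA), hlenA]
          simp
        refine ⟨⟨⟨⟨?_, ?_⟩, ?_⟩, by omega, by rw [hgetD]; omega⟩, hgetD⟩
        · refine List.pairwise_append.mpr ⟨sorted_map_add l hsA, ?_, ?_⟩
          · exact List.pairwise_cons.mpr ⟨fun y hy => hBle y hy, sorted_map_add 1 hsB⟩
          · intro x hx y hy
            have hxl := hAge x hx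
            rcases List.mem_cons.mp hy with rfl | hy2
            · exact hxl
            · exact le_trans (hBle y hy2) hxl
        · intro x hx
          rcases List.mem_append.mp hx with h1 | h1
          · have := hAge x h1; omega
          · rcases List.mem_cons.mp h1 with rfl | h2
            · omega
            · rw [List.mem_map] at h2
              obtain ⟨y, _, rfl⟩ := h2
              omega
        · rw [List.sum_append, List.sum_cons, hsum1, hsum2]
          omega⟩
      left_inv := fun L => Subtype.ext (by
        obtain ⟨Lv, hLv⟩ := L
        obtain ⟨ht, hget, hlen, hB, hA, hsum⟩ := key Lv hLv
        simp only [List.map_map]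
        have e1 : ∀ x ∈ Lv.take t, ((· + l) ∘ (· - l)) x = id x := by
          intro x hx
          have := hget ▸ get_le_take (hLv.1.1.1.1) ht x hx
          simp
          omega
        have e2 : ∀ x ∈ Lv.drop (t + 1), ((· + 1) ∘ (· - 1)) x = id x := by
          intro x hx
          have := hLv.1.1.1.2 x (List.mem_of_mem_drop hx)
          simp
          omega
        rw [List.map_congr_left e1, List.map_congr_left e2, List.map_id, List.map_id, ← hget]
        have hcons : Lv.get ⟨t, ht⟩ :: Lv.drop (t + 1) = Lv.drop t := by
          rw [List.drop_eq_getElem_cons ht]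
          simp
        rw [hcons, List.take_append_drop])
      right_inv := fun p => Subtype.ext (by
        obtain ⟨⟨hsB, hlB, hbB⟩, ⟨hsA, hlA⟩, hsum⟩ := p.2
        have hlenA : (p.1.2.map (· + l)).length = t := by simp [hlA]
        have hdrop : ((p.1.2.map (· + l)) ++ l :: (p.1.1.map (· + 1))).drop (t + 1)
            = p.1.1.map (· + 1) := by
          rw [show (p.1.2.map (· + l)) ++ l :: (p.1.1.map (· + 1))
              = ((p.1.2.map (· + l)) ++ [l]) ++ (p.1.1.map (· + 1)) from by simp]
          refine List.drop_left' ?_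
          simp [hlenA]
        have htake : ((p.1.2.map (· + l)) ++ l :: (p.1.1.map (· + 1))).take t
            = p.1.2.map (· + l) := List.take_left' hlenA
        apply Prod.ext
        · show ((((p.1.2.map (· + l)) ++ l :: (p.1.1.map (· + 1))).drop (t + 1)).map (· - 1))
            = p.1.1
          rw [hdrop, List.map_map]
          have : ∀ x ∈ p.1.1, ((· - 1) ∘ (· + 1)) x = id x := by intro x _; simp
          rw [List.map_congr_left this, List.map_id]
        · show ((((p.1.2.map (· + l)) ++ l :: (p.1.1.map (· + 1))).take t).map (· - l))
            = p.1.2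
          rw [htake, List.map_map]
          have : ∀ x ∈ p.1.2, ((· - l) ∘ (· + l)) x = id x := by intro x _; simp
          rw [List.map_congr_left this, List.map_id]) }

end Main

/-- The generating function for partitions of `n` with an `h`-fixed hook whose hook
length is `k` is `∑_{l=1}^k q^{k + l(k-h-1)} [k-1 choose l-1]_q / (q)_{k-h-1}`. -/
theorem stmt15 (h : ℤ) (k : ℕ) (hk : 1 ≤ k) (hhk : h < k) :
    PowerSeries.mk (fun n =>
        (Nat.card {L : List ℕ // PartitionOf n L ∧
          ∃ i, ∃ hi : i < L.length,
            (L.get ⟨i, hi⟩ : ℤ) + L.length - (i + 1) = (i + 1) + h ∧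
            (L.get ⟨i, hi⟩ : ℤ) + L.length - (i + 1) = k} : ℚ)) =
      (∑ l ∈ Finset.Icc 1 k,
          (X : PowerSeries ℚ) ^ (k + l * ((k : ℤ) - h - 1).toNat) * gauss (k - 1) (l - 1)) *
        (poch (((k : ℤ) - h - 1).toNat))⁻¹ := by
  classical
  have htnn : (0 : ℤ) ≤ (k : ℤ) - h - 1 := by omega
  set t : ℕ := ((k : ℤ) - h - 1).toNat with htdef
  have ht : (t : ℤ) = (k : ℤ) - h - 1 := Int.toNat_of_nonneg htnn
  rw [poch_inv_eq, Finset.sum_mul]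
  ext n
  rw [coeff_mk, map_sum]
  have hcard1 : Nat.card {L : List ℕ // PartitionOf n L ∧
        ∃ i, ∃ hi : i < L.length,
          (L.get ⟨i, hi⟩ : ℤ) + L.length - (i + 1) = (i + 1) + h ∧
          (L.get ⟨i, hi⟩ : ℤ) + L.length - (i + 1) = k}
      = Nat.card {L : List ℕ // PartitionOf n L ∧ t < L.length ∧
          L.getD t 0 + L.length = k + t + 1} :=
    Nat.card_congr (Equiv.subtypeEquivRight fun L =>
      and_congr_right fun _ => hook_iff h k t ht L)
  have hfinP : Finite {L : List ℕ // PartitionOf n L ∧ t < L.length ∧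
      L.getD t 0 + L.length = k + t + 1} := by
    refine listFinite (m := k + t + 1) (n := n) fun L hL => ⟨?_, fun x hx => ?_⟩
    · have h1 := hL.2.2
      have h2 : L.getD t 0 + L.length = k + t + 1 := h1
      omega
    · exact hL.1.2 ▸ List.le_sum_of_mem hx
  have hin : ∀ L : List ℕ,
      (PartitionOf n L ∧ t < L.length ∧ L.getD t 0 + L.length = k + t + 1) →
        L.getD t 0 ∈ Finset.Icc 1 k := by
    intro L hL
    obtain ⟨⟨⟨hsort, hpos⟩, hsum⟩, hlt, heq⟩ := hL
    rw [getD_eq_get_old _ _ hlt] at heq ⊢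
    refine Finset.mem_Icc.mpr ⟨hpos _ (L.get_mem _), by omega⟩
  have hcard2 := card_fiber_sum (fun L : List ℕ => L.getD t 0) (Finset.Icc 1 k)
    (fun L => PartitionOf n L ∧ t < L.length ∧ L.getD t 0 + L.length = k + t + 1)
    hfinP hin
  rw [hcard1, hcard2]
  push_cast
  refine Finset.sum_congr rfl fun l hl => ?_
  obtain ⟨hl1, hlk⟩ := Finset.mem_Icc.mp hl
  have hfin1 : Finite {a : List ℕ // Bty (k - l) (l - 1) a} :=
    listFinite (m := k - l) (n := l - 1) fun L hL => ⟨hL.2.1.le, hL.2.2⟩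
  have hfin2 : Finite {b : List ℕ // Aty t b ∧ b.sum ≤ n} :=
    listFinite (m := t) (n := n) fun L hL =>
      ⟨hL.1.2.le, fun x hx => (List.le_sum_of_mem hx).trans hL.2⟩
  have hfinpair : Finite {p : List ℕ × List ℕ // Bty (k - l) (l - 1) p.1 ∧ Aty t p.2 ∧
      p.1.sum + p.2.sum + (k + l * t) = n} :=
    finite_pair hfin1 hfin2 fun p hp => ⟨hp.1, hp.2.1, by have := hp.2.2; omega⟩
  have e1 : Nat.card {L : List ℕ // (PartitionOf n L ∧ t < L.length ∧
          L.getD t 0 + L.length = k + t + 1) ∧ L.getD t 0 = l}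
      = Nat.card {p : List ℕ × List ℕ // Bty (k - l) (l - 1) p.1 ∧ Aty t p.2 ∧
          p.1.sum + p.2.sum + (k + l * t) = n} :=
    Nat.card_congr (slice_equiv k t l n hl1 hlk)
  have e2 := conv_card (k + l * t) n (Bty (k - l) (l - 1)) (Aty t) hfinpair
  rw [e1, e2]
  rw [show k - 1 = (k - l) + (l - 1) from by omega, gauss_eq_mkB, mul_assoc,
    coeff_X_pow_mul']
  rw [coeff_mul]
  simp only [mkB, mkA, coeff_mk]
  push_cast [apply_ite (Nat.cast : ℕ → ℚ)]
  split_ifs <;> simp
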